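/- In the many-to-one stable matching market with base-station quota Q and strict preferences on both sides, every stable matching matches the same number of proposers (rural hospitals-style consequence): in particular, if some stable matching leaves a source unmatched, then every stable matching leaves that same source unmatched. -/

import Mathlib

/-- Acceptors of the relay-selection market: `Nr` relays plus one base station. -/
abbrev Acceptor (Nr : ℕ) := Fin Nr ⊕ Unit

/-- Quotas: each relay has quota 1, the base station has quota `Q`. -/
def quota (Nr Q : ℕ) : Acceptor Nr → ℕ := Sum.elim (fun _ => 1) (fun _ => Q)

/-- `ν` is a many-to-one matching of sources to acceptors: quotas respected, each
source matched to at most one acceptor, and only to acceptable acceptors. -/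
def IsMatchingQ {Ns Nr : ℕ} (prefP : Fin Ns → List (Acceptor Nr)) (q : Acceptor Nr → ℕ)
    (ν : Acceptor Nr → Finset (Fin Ns)) : Prop :=
  (∀ a, (ν a).card ≤ q a) ∧
  (∀ p a a', p ∈ ν a → p ∈ ν a' → a = a') ∧
  (∀ a p, p ∈ ν a → a ∈ prefP p)

/-- Stability: no blocking pair `(p, a)` where `a` is acceptable to `p`, not matched
to `p`, `p` prefers `a` to its current match (or is unmatched), and `a` has a free
slot or prefers `p` to one of its currently matched sources. -/
def IsStable {Ns Nr : ℕ} (prefP : Fin Ns → List (Acceptor Nr)) (q : Acceptor Nr → ℕ)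
    (prefA : Acceptor Nr → Fin Ns → ℕ) (ν : Acceptor Nr → Finset (Fin Ns)) : Prop :=
  IsMatchingQ prefP q ν ∧
  ¬ ∃ (p : Fin Ns) (a : Acceptor Nr),
      a ∈ prefP p ∧ p ∉ ν a ∧
      (∀ a', p ∈ ν a' → (prefP p).idxOf a < (prefP p).idxOf a') ∧
      ((ν a).card < q a ∨ ∃ p' ∈ ν a, prefA a p < prefA a p')

/-!
Let `G` be the set of sources that strictly prefer their partner in `ν` to their partner in
`μ`, being unmatched counting as worst. If some `p ∈ G` sits at `a` in `ν`, stability of `μ`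
forces `a` to be full in `μ` with every `μ`-partner ranked above `p`; stability of `ν` then
sends every source of `μ a \ ν a` into `G`. Hence at every acceptor `G` fills at least as many
`μ`-slots as `ν`-slots. Summing over acceptors, all of `G` is matched in `μ`, so no source is
matched in `ν` but not in `μ`.
-/

open Finset

instance Sum.instLawfulBEq {α β : Type*} [BEq α] [BEq β] [LawfulBEq α] [LawfulBEq β] :
    LawfulBEq (α ⊕ β) where
  eq_of_beq {a b} h := by
    cases a <;> cases b
    all_goals first | cases h | exact congrArg _ (eq_of_beq h)
  rfl {a} := by
    cases a with
    | inl x => exact beq_self_eq_true x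
    | inr y => exact beq_self_eq_true y

theorem Finset.sum_card_inter_eq_card_inter_biUnion {ι α : Type*} [DecidableEq α]
    {f : ι → Finset α} (hf : ∀ x i j, x ∈ f i → x ∈ f j → i = j) (s : Finset α)
    (t : Finset ι) : ∑ i ∈ t, #(s ∩ f i) = #(s ∩ t.biUnion f) := by
  rw [inter_biUnion, card_biUnion]
  intro i _ j _ hij
  exact disjoint_left.2 fun x hi hj => hij (hf x i j (mem_inter.1 hi).2 (mem_inter.1 hj).2)

section Stability

variable {Ns Nr : ℕ} {prefP : Fin Ns → List (Acceptor Nr)} {q : Acceptor Nr → ℕ}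
  {prefA : Acceptor Nr → Fin Ns → ℕ} {μ ν : Acceptor Nr → Finset (Fin Ns)}

open Classical in
noncomputable def gainers (prefP : Fin Ns → List (Acceptor Nr))
    (μ ν : Acceptor Nr → Finset (Fin Ns)) : Finset (Fin Ns) :=
  univ.filter fun p => ∃ a, p ∈ ν a ∧ ∀ a', p ∈ μ a' → (prefP p).idxOf a < (prefP p).idxOf a'

theorem mem_gainers {p : Fin Ns} : p ∈ gainers prefP μ ν ↔
    ∃ a, p ∈ ν a ∧ ∀ a', p ∈ μ a' → (prefP p).idxOf a < (prefP p).idxOf a' := by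
  simp [gainers]

theorem IsStable.le_card_and_lt_of_prefers (hμ : IsStable prefP q prefA μ)
    {a : Acceptor Nr} (hA : Function.Injective (prefA a)) {p : Fin Ns} (hpa : a ∈ prefP p)
    (hp : ∀ a', p ∈ μ a' → (prefP p).idxOf a < (prefP p).idxOf a') :
    q a ≤ #(μ a) ∧ ∀ p' ∈ μ a, prefA a p' < prefA a p := by
  have hpμ : p ∉ μ a := fun h => (hp a h).false
  have hunblocked : ¬ (#(μ a) < q a ∨ ∃ p' ∈ μ a, prefA a p < prefA a p') :=
    fun h => hμ.2 ⟨p, a, hpa, hpμ, hp, h⟩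
  push Not at hunblocked
  refine ⟨hunblocked.1, fun p' hp' => (hunblocked.2 p' hp').lt_of_ne fun h => ?_⟩
  exact hpμ (hA h ▸ hp')

theorem IsStable.mem_gainers_of_lt (hν : IsStable prefP q prefA ν) (hμ : IsMatchingQ prefP q μ)
    {a : Acceptor Nr} {p p' : Fin Ns} (hp : p ∈ ν a) (hp'μ : p' ∈ μ a) (hp'ν : p' ∉ ν a)
    (hlt : prefA a p' < prefA a p) : p' ∈ gainers prefP μ ν := by
  have hpa : a ∈ prefP p' := hμ.2.2 a p' hp'μ
  have hnot : ¬ ∀ a', p' ∈ ν a' → (prefP p').idxOf a < (prefP p').idxOf a' :=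
    fun h => hν.2 ⟨p', a, hpa, hp'ν, h, Or.inr ⟨p, hp, hlt⟩⟩
  push Not at hnot
  obtain ⟨a₁, hp'a₁, hle⟩ := hnot
  have hne : a₁ ≠ a := fun h => hp'ν (h ▸ hp'a₁)
  have hlt₁ : (prefP p').idxOf a₁ < (prefP p').idxOf a :=
    hle.lt_of_ne fun h => hne ((List.idxOf_inj (hν.1.2.2 a₁ p' hp'a₁)).1 h)
  refine mem_gainers.2 ⟨a₁, hp'a₁, fun a' ha' => ?_⟩
  rwa [hμ.2.1 p' a' a ha' hp'μ]

theorem IsStable.card_gainers_inter_le (hA : ∀ a, Function.Injective (prefA a))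
    (hμ : IsStable prefP q prefA μ) (hν : IsStable prefP q prefA ν) (a : Acceptor Nr) :
    #(gainers prefP μ ν ∩ ν a) ≤ #(gainers prefP μ ν ∩ μ a) := by
  rcases (gainers prefP μ ν ∩ ν a).eq_empty_or_nonempty with h | ⟨p, hp⟩
  · simp [h]
  obtain ⟨hpG, hpν⟩ := mem_inter.1 hp
  obtain ⟨a₀, hpa₀, hprefers⟩ := mem_gainers.1 hpG
  obtain rfl : a₀ = a := hν.1.2.1 p a₀ a hpa₀ hpν
  obtain ⟨hfull, hrank⟩ :=
    hμ.le_card_and_lt_of_prefers (hA a₀) (hν.1.2.2 a₀ p hpν) hprefers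
  have hG_ν : gainers prefP μ ν ∩ ν a₀ ⊆ ν a₀ \ μ a₀ := by
    intro x hx
    obtain ⟨hxG, hxν⟩ := mem_inter.1 hx
    obtain ⟨b, hxb, hb⟩ := mem_gainers.1 hxG
    obtain rfl : b = a₀ := hν.1.2.1 x b a₀ hxb hxν
    exact mem_sdiff.2 ⟨hxν, fun hxμ => (hb b hxμ).false⟩
  have hμ_G : μ a₀ \ ν a₀ ⊆ gainers prefP μ ν ∩ μ a₀ := by
    intro x hx
    obtain ⟨hxμ, hxν⟩ := mem_sdiff.1 hx
    exact mem_inter.2 ⟨hν.mem_gainers_of_lt hμ.1 hpν hxμ hxν (hrank x hxμ), hxμ⟩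
  calc #(gainers prefP μ ν ∩ ν a₀) ≤ #(ν a₀ \ μ a₀) := card_le_card hG_ν
    _ ≤ #(μ a₀ \ ν a₀) := card_sdiff_le_card_sdiff_iff.2 ((hν.1.1 a₀).trans hfull)
    _ ≤ #(gainers prefP μ ν ∩ μ a₀) := card_le_card hμ_G

theorem IsStable.exists_mem_of_mem_gainers (hA : ∀ a, Function.Injective (prefA a))
    (hμ : IsStable prefP q prefA μ) (hν : IsStable prefP q prefA ν) {p : Fin Ns}
    (hp : p ∈ gainers prefP μ ν) : ∃ a, p ∈ μ a := by
  set G := gainers prefP μ ν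
  have hGν : G ∩ univ.biUnion ν = G :=
    inter_eq_left.2 fun x hx => by
      obtain ⟨b, hxb, -⟩ := mem_gainers.1 hx
      exact mem_biUnion.2 ⟨b, mem_univ b, hxb⟩
  have hcard : #G ≤ #(G ∩ univ.biUnion μ) := by
    calc #G = ∑ a, #(G ∩ ν a) := by rw [sum_card_inter_eq_card_inter_biUnion hν.1.2.1, hGν]
      _ ≤ ∑ a, #(G ∩ μ a) := sum_le_sum fun a _ => hμ.card_gainers_inter_le hA hν a
      _ = #(G ∩ univ.biUnion μ) := sum_card_inter_eq_card_inter_biUnion hμ.1.2.1 _ _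
  have hGμ : G ∩ univ.biUnion μ = G := eq_of_subset_of_card_le inter_subset_left hcard
  rw [← hGμ, mem_inter, mem_biUnion] at hp
  obtain ⟨-, a, -, hpa⟩ := hp
  exact ⟨a, hpa⟩

theorem IsStable.notMem_of_forall_notMem (hA : ∀ a, Function.Injective (prefA a))
    (hμ : IsStable prefP q prefA μ) (hν : IsStable prefP q prefA ν) {p : Fin Ns}
    (hp : ∀ a, p ∉ μ a) (a : Acceptor Nr) : p ∉ ν a := fun hpa =>
  let ⟨b, hb⟩ := hμ.exists_mem_of_mem_gainers hA hν
    (mem_gainers.2 ⟨a, hpa, fun a' ha' => absurd ha' (hp a')⟩)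
  hp b hb

end Stability

theorem rural_hospitals_for_relay_market_general (Ns Nr Q : ℕ)
    (prefP : Fin Ns → List (Acceptor Nr)) (prefA : Acceptor Nr → Fin Ns → ℕ)
    (hA : ∀ a, Function.Injective (prefA a))
    (μ ν : Acceptor Nr → Finset (Fin Ns))
    (hμ : IsStable prefP (quota Nr Q) prefA μ)
    (hν : IsStable prefP (quota Nr Q) prefA ν) :
    (Finset.univ.filter fun p : Fin Ns => ∃ a, p ∈ μ a).card =
      (Finset.univ.filter fun p : Fin Ns => ∃ a, p ∈ ν a).card ∧
    ∀ p : Fin Ns, (∀ a, p ∉ μ a) → ∀ a, p ∉ ν a := by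
  refine ⟨congrArg card (filter_congr fun p _ => ?_), fun p => hμ.notMem_of_forall_notMem hA hν⟩
  constructor
  · rintro ⟨a, ha⟩
    by_contra! h
    exact hν.notMem_of_forall_notMem hA hμ h a ha
  · rintro ⟨a, ha⟩
    by_contra! h
    exact hμ.notMem_of_forall_notMem hA hν h a ha

/-- rural hospitals-style: in the many-to-one market with base-station
quota `Q`, relay quotas 1 and strict preferences on both sides, every stable matching
matches the same number of sources; in particular, a source unmatched in some stable
matching is unmatched in every stable matching. -/
theorem rural_hospitals_for_relay_market (Ns Nr Q : ℕ)
    (prefP : Fin Ns → List (Acceptor Nr)) (prefA : Acceptor Nr → Fin Ns → ℕ)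
    (hP : ∀ p, (prefP p).Nodup) (hA : ∀ a, Function.Injective (prefA a))
    (hQ : 0 < Q)
    (μ ν : Acceptor Nr → Finset (Fin Ns))
    (hμ : IsStable prefP (quota Nr Q) prefA μ)
    (hν : IsStable prefP (quota Nr Q) prefA ν) :
    (Finset.univ.filter fun p : Fin Ns => ∃ a, p ∈ μ a).card =
      (Finset.univ.filter fun p : Fin Ns => ∃ a, p ∈ ν a).card ∧
    ∀ p : Fin Ns, (∀ a, p ∉ μ a) → ∀ a, p ∉ ν a :=
  rural_hospitals_for_relay_market_general Ns Nr Q prefP prefA hA μ ν hμ hν
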